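/- arXiv:2210.10192 — 8 statements merged into one kernel-verified Lean document; each statement's English description precedes it below -/
import Mathlib

section
/- Let R and Q be real Hilbert spaces and T : R → Q a continuous linear map. Suppose there is a constant C† > 0 such that for every q ∈ Q one has sup over nonzero w ∈ R of ⟨T w, q⟩_Q / ‖w‖_R ≥ C† ‖q‖_Q. Then for every q ∈ Q there exists w ∈ R with T w = q and ‖w‖_R ≤ (1/C†) ‖q‖_Q. -/
open scoped RealInnerProductSpace NNReal

/-!
The inf-sup condition says exactly that the adjoint `T†` is bounded below by `C†`. Then
`⟪T T† p, p⟫ = ‖T† p‖² ≥ C†² ‖p‖²`, so `T T†` is invertible, and `w = T† p` with `T T† p = q`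
is a preimage of `q`. Its norm is controlled through
`‖T† p‖² = ⟪p, q⟫ ≤ ‖p‖ ‖q‖ ≤ ‖T† p‖ ‖q‖ / C†`.
-/

namespace ContinuousLinearMap

variable {R Q : Type*} [NormedAddCommGroup R] [InnerProductSpace ℝ R] [CompleteSpace R]
  [NormedAddCommGroup Q] [InnerProductSpace ℝ Q] [CompleteSpace Q]

theorem iSup_inner_div_norm_le_norm_adjoint (T : R →L[ℝ] Q) (q : Q) :
    ⨆ w : {w : R // w ≠ 0}, ⟪T w.1, q⟫ / ‖w.1‖ ≤ ‖adjoint T q‖ := by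
  refine Real.iSup_le ?_ (norm_nonneg _)
  rintro ⟨w, hw⟩
  dsimp only
  rw [← adjoint_inner_right, div_le_iff₀ (norm_pos_iff.mpr hw), mul_comm]
  exact real_inner_le_norm w _

theorem isUnit_comp_adjoint_of_le_norm_adjoint (T : R →L[ℝ] Q) {C : ℝ} (hC : 0 < C)
    (h : ∀ q, C * ‖q‖ ≤ ‖adjoint T q‖) : IsUnit (T ∘L adjoint T) := by
  refine isUnit_of_forall_le_norm_inner_map _ (c := C.toNNReal ^ 2) (by positivity) fun p => ?_
  have hp : ⟪(T ∘L adjoint T) p, p⟫ = ‖adjoint T p‖ ^ 2 := by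
    rw [comp_apply, ← adjoint_inner_right, real_inner_self_eq_norm_sq]
  rw [hp, NNReal.coe_pow, Real.coe_toNNReal _ hC.le, Real.norm_of_nonneg (by positivity)]
  calc ‖p‖ ^ 2 * C ^ 2 = (C * ‖p‖) ^ 2 := by ring
    _ ≤ ‖adjoint T p‖ ^ 2 := pow_le_pow_left₀ (by positivity) (h p) 2

theorem norm_adjoint_le_of_comp_adjoint_apply_eq (T : R →L[ℝ] Q) {C : ℝ} (hC : 0 < C)
    (h : ∀ q, C * ‖q‖ ≤ ‖adjoint T q‖) {p q : Q} (hpq : T (adjoint T p) = q) :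
    ‖adjoint T p‖ ≤ (1 / C) * ‖q‖ := by
  have hsq : ‖adjoint T p‖ ^ 2 = ⟪p, q⟫ := by
    rw [← real_inner_self_eq_norm_sq, adjoint_inner_left, hpq]
  have hmul : ‖adjoint T p‖ * (C * ‖adjoint T p‖) ≤ ‖adjoint T p‖ * ‖q‖ := by
    nlinarith [real_inner_le_norm p q, mul_le_mul_of_nonneg_right (h p) (norm_nonneg q)]
  rw [one_div_mul_eq_div, le_div_iff₀ hC, mul_comm]
  rcases (norm_nonneg (adjoint T p)).eq_or_lt with h0 | hpos
  · rw [← h0, mul_zero]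
    exact norm_nonneg q
  · exact le_of_mul_le_mul_left hmul hpos

theorem exists_apply_eq_norm_le_of_le_norm_adjoint (T : R →L[ℝ] Q) {C : ℝ} (hC : 0 < C)
    (h : ∀ q, C * ‖q‖ ≤ ‖adjoint T q‖) (q : Q) :
    ∃ w : R, T w = q ∧ ‖w‖ ≤ (1 / C) * ‖q‖ := by
  obtain ⟨p, hp⟩ := (isUnit_iff_bijective.mp (isUnit_comp_adjoint_of_le_norm_adjoint T hC h)).2 q
  exact ⟨adjoint T p, hp, norm_adjoint_le_of_comp_adjoint_apply_eq T hC h hp⟩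

end ContinuousLinearMap

/-- Lemma (bounded right inverse from an inf-sup condition): if `T : R → Q` is a continuous
linear map between real Hilbert spaces and there is `C† > 0` such that for every `q ∈ Q`
the supremum over nonzero `w` of `⟨T w, q⟩ / ‖w‖` is at least `C† ‖q‖`, then every `q`
has a preimage `w` with `‖w‖ ≤ (1/C†) ‖q‖`. -/
theorem bounded_right_inverse_of_inf_sup
    {R Q : Type*} [NormedAddCommGroup R] [InnerProductSpace ℝ R] [CompleteSpace R]
    [NormedAddCommGroup Q] [InnerProductSpace ℝ Q] [CompleteSpace Q]
    (T : R →L[ℝ] Q) (Cdag : ℝ) (hCdag : 0 < Cdag)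
    (hsup : ∀ q : Q, Cdag * ‖q‖ ≤ ⨆ w : {w : R // w ≠ 0}, ⟪T w.1, q⟫ / ‖w.1‖) :
    ∀ q : Q, ∃ w : R, T w = q ∧ ‖w‖ ≤ (1 / Cdag) * ‖q‖ :=
  T.exists_apply_eq_norm_le_of_le_norm_adjoint hCdag fun q =>
    (hsup q).trans (T.iSup_inner_div_norm_le_norm_adjoint q)
end

section
/- Let V₂, V₁, W, Q, Q₂ be real Hilbert spaces and let d₂ : V₂ → V₁, d₁ : V₁ → W, S₁ : V₁ → Q, S₂ : V₂ → Q₂, D : Q₂ → Q be continuous linear maps such that d₁ ∘ d₂ = 0, S₁ ∘ d₂ = D ∘ S₂, d₁ is surjective, and the composition D ∘ S₂ : V₂ → Q is surjective. Then the map T : V₁ → W × Q defined by T τ = (d₁ τ, S₁ τ) is surjective. -/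
/-- Coupled Hilbert complexes: if `d₁ ∘ d₂ = 0`, `S₁ ∘ d₂ = D ∘ S₂`, `d₁` is surjective and
`D ∘ S₂` is surjective, then the combined map `τ ↦ (d₁ τ, S₁ τ)` is surjective. -/
theorem combined_map_surjective_of_coupled_complexes
    {V₂ V₁ W Q Q₂ : Type*}
    [NormedAddCommGroup V₂] [InnerProductSpace ℝ V₂] [CompleteSpace V₂]
    [NormedAddCommGroup V₁] [InnerProductSpace ℝ V₁] [CompleteSpace V₁]
    [NormedAddCommGroup W] [InnerProductSpace ℝ W] [CompleteSpace W]
    [NormedAddCommGroup Q] [InnerProductSpace ℝ Q] [CompleteSpace Q]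
    [NormedAddCommGroup Q₂] [InnerProductSpace ℝ Q₂] [CompleteSpace Q₂]
    (d₂ : V₂ →L[ℝ] V₁) (d₁ : V₁ →L[ℝ] W) (S₁ : V₁ →L[ℝ] Q)
    (S₂ : V₂ →L[ℝ] Q₂) (D : Q₂ →L[ℝ] Q)
    (hcomplex : ∀ x : V₂, d₁ (d₂ x) = 0)
    (hcomm : ∀ x : V₂, S₁ (d₂ x) = D (S₂ x))
    (hd₁ : Function.Surjective d₁)
    (hDS₂ : Function.Surjective (fun x : V₂ => D (S₂ x))) :
    Function.Surjective (fun τ : V₁ => ((d₁ τ, S₁ τ) : W × Q)) := by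
  rintro ⟨w, q⟩
  obtain ⟨τ₀, hτ₀⟩ := hd₁ w
  obtain ⟨x, hx⟩ := hDS₂ (q - S₁ τ₀)
  refine ⟨τ₀ + d₂ x, ?_⟩
  simp only [map_add, hcomplex, hcomm, hτ₀, hx, Prod.mk.injEq]
  constructor <;> abel
end

section
/- Let V₂, V₁, W, Q, Q₂ be real Hilbert spaces and let d₂ : V₂ → V₁, d₁ : V₁ → W, S₁ : V₁ → Q, S₂ : V₂ → Q₂, D : Q₂ → Q be continuous linear maps such that d₁ ∘ d₂ = 0, S₁ ∘ d₂ = D ∘ S₂, d₁ is surjective, and D ∘ S₂ : V₂ → Q is surjective. Then there exists a constant C > 0 such that for every v ∈ W and q ∈ Q, the supremum over nonzero τ ∈ V₁ of (⟨d₁ τ, v⟩_W + ⟨S₁ τ, q⟩_Q) / ‖τ‖_V is at least C (‖v‖ + ‖q‖), where ‖τ‖_V := √(‖τ‖² + ‖d₁ τ‖²) is the graph norm. -/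
/-!
The pair map `τ ↦ (d₁ τ, S₁ τ) : V₁ → W × Q` is onto: lift `v` through `d₁` to some `τ₀`, then
correct `τ₀` by `d₂ x`, where `D (S₂ x) = q - S₁ τ₀`; the complex property keeps `d₁` unchanged and
the commuting diagram makes `S₁` hit `q`. By the open mapping theorem every `(v, q)` therefore has a
preimage `τ` with `‖τ‖ ≤ M (‖v‖ + ‖q‖)`, and testing the supremum with this `τ` gives
`(‖v‖² + ‖q‖²) / ‖τ‖_V ≥ (‖v‖ + ‖q‖) / (2 (M + 1))`.
-/

open scoped RealInnerProductSpace

theorem LinearMap.surjective_prod_of_coupled_complexes {R V₂ V₁ W Q Q₂ : Type*} [Semiring R]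
    [AddCommMonoid V₂] [AddCommMonoid V₁] [AddCommMonoid W] [AddCommGroup Q] [AddCommMonoid Q₂]
    [Module R V₂] [Module R V₁] [Module R W] [Module R Q] [Module R Q₂]
    (d₂ : V₂ →ₗ[R] V₁) (d₁ : V₁ →ₗ[R] W) (S₁ : V₁ →ₗ[R] Q) (S₂ : V₂ →ₗ[R] Q₂) (D : Q₂ →ₗ[R] Q)
    (hcomplex : ∀ x, d₁ (d₂ x) = 0) (hcomm : ∀ x, S₁ (d₂ x) = D (S₂ x))
    (hd₁ : Function.Surjective d₁) (hDS₂ : Function.Surjective fun x => D (S₂ x)) :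
    Function.Surjective (d₁.prod S₁) := by
  rintro ⟨v, q⟩
  obtain ⟨τ₀, rfl⟩ := hd₁ v
  obtain ⟨x, hx⟩ := hDS₂ (q - S₁ τ₀)
  refine ⟨τ₀ + d₂ x, Prod.ext ?_ ?_⟩
  · simp [hcomplex]
  · simp [hcomm, hx]

theorem ContinuousLinearMap.exists_prod_preimage_norm_le {𝕜 E F G : Type*}
    [NontriviallyNormedField 𝕜] [NormedAddCommGroup E] [NormedSpace 𝕜 E] [CompleteSpace E]
    [NormedAddCommGroup F] [NormedSpace 𝕜 F] [CompleteSpace F]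
    [NormedAddCommGroup G] [NormedSpace 𝕜 G] [CompleteSpace G]
    (f : E →L[𝕜] F) (g : E →L[𝕜] G) (h : Function.Surjective (f.prod g)) :
    ∃ M > 0, ∀ y z, ∃ x, f x = y ∧ g x = z ∧ ‖x‖ ≤ M * (‖y‖ + ‖z‖) := by
  obtain ⟨M, hM, hpre⟩ := (f.prod g).exists_preimage_norm_le h
  refine ⟨M, hM, fun y z => ?_⟩
  obtain ⟨x, hx, hxM⟩ := hpre (y, z)
  obtain ⟨rfl, rfl⟩ := Prod.ext_iff.mp hx
  refine ⟨x, rfl, rfl, hxM.trans ?_⟩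
  gcongr
  exact max_le_add_of_nonneg (norm_nonneg _) (norm_nonneg _)

theorem div_le_sq_add_sq_div_sqrt {a b t M : ℝ} (ha : 0 ≤ a) (hb : 0 ≤ b) (hM : 0 ≤ M)
    (ht : 0 < t) (htM : t ≤ M * (a + b)) :
    (a + b) / (2 * (M + 1)) ≤ (a ^ 2 + b ^ 2) / √(t ^ 2 + a ^ 2) := by
  have hg : 0 < √(t ^ 2 + a ^ 2) := Real.sqrt_pos.mpr (by positivity)
  have hg_le : √(t ^ 2 + a ^ 2) ≤ (M + 1) * (a + b) :=
    (Real.sqrt_le_left (by positivity)).mpr (by nlinarith)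
  rw [div_le_div_iff₀ (by positivity) hg]
  calc (a + b) * √(t ^ 2 + a ^ 2) ≤ (a + b) * ((M + 1) * (a + b)) := by gcongr
    _ ≤ (a ^ 2 + b ^ 2) * (2 * (M + 1)) := by nlinarith [sq_nonneg (a - b)]

theorem bddAbove_range_inner_div_graphNorm {V₁ W Q : Type*}
    [NormedAddCommGroup V₁] [InnerProductSpace ℝ V₁]
    [NormedAddCommGroup W] [InnerProductSpace ℝ W] [NormedAddCommGroup Q] [InnerProductSpace ℝ Q]
    (d₁ : V₁ →L[ℝ] W) (S₁ : V₁ →L[ℝ] Q) (v : W) (q : Q) :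
    BddAbove (Set.range fun τ : {τ : V₁ // τ ≠ 0} =>
      (⟪d₁ τ.1, v⟫ + ⟪S₁ τ.1, q⟫) / √(‖τ.1‖ ^ 2 + ‖d₁ τ.1‖ ^ 2)) := by
  refine ⟨‖v‖ + ‖S₁‖ * ‖q‖, ?_⟩
  rintro _ ⟨⟨τ, -⟩, rfl⟩
  have hτ : ‖τ‖ ≤ √(‖τ‖ ^ 2 + ‖d₁ τ‖ ^ 2) := Real.le_sqrt_of_sq_le (by nlinarith)
  have hdτ : ‖d₁ τ‖ ≤ √(‖τ‖ ^ 2 + ‖d₁ τ‖ ^ 2) := Real.le_sqrt_of_sq_le (by nlinarith)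
  refine div_le_of_le_mul₀ (Real.sqrt_nonneg _) (by positivity) ?_
  calc ⟪d₁ τ, v⟫ + ⟪S₁ τ, q⟫ ≤ ‖d₁ τ‖ * ‖v‖ + ‖S₁‖ * ‖τ‖ * ‖q‖ := by
        gcongr
        · exact real_inner_le_norm _ _
        · exact (real_inner_le_norm _ _).trans (by gcongr; exact S₁.le_opNorm τ)
    _ ≤ (‖v‖ + ‖S₁‖ * ‖q‖) * √(‖τ‖ ^ 2 + ‖d₁ τ‖ ^ 2) := by
        rw [add_mul, mul_comm ‖v‖, mul_right_comm]
        gcongr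

theorem inf_sup_S2_of_coupled_complexes_general
    {V₂ V₁ W Q Q₂ : Type*}
    [NormedAddCommGroup V₂] [InnerProductSpace ℝ V₂]
    [NormedAddCommGroup V₁] [InnerProductSpace ℝ V₁] [CompleteSpace V₁]
    [NormedAddCommGroup W] [InnerProductSpace ℝ W] [CompleteSpace W]
    [NormedAddCommGroup Q] [InnerProductSpace ℝ Q] [CompleteSpace Q]
    [NormedAddCommGroup Q₂] [InnerProductSpace ℝ Q₂]
    (d₂ : V₂ →L[ℝ] V₁) (d₁ : V₁ →L[ℝ] W) (S₁ : V₁ →L[ℝ] Q)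
    (S₂ : V₂ →L[ℝ] Q₂) (D : Q₂ →L[ℝ] Q)
    (hcomplex : ∀ x : V₂, d₁ (d₂ x) = 0)
    (hcomm : ∀ x : V₂, S₁ (d₂ x) = D (S₂ x))
    (hd₁ : Function.Surjective d₁)
    (hDS₂ : Function.Surjective (fun x : V₂ => D (S₂ x))) :
    ∃ C : ℝ, 0 < C ∧ ∀ (v : W) (q : Q),
      C * (‖v‖ + ‖q‖) ≤
        ⨆ τ : {τ : V₁ // τ ≠ 0},
          (⟪d₁ τ.1, v⟫ + ⟪S₁ τ.1, q⟫) / Real.sqrt (‖τ.1‖ ^ 2 + ‖d₁ τ.1‖ ^ 2) := by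
  have hsurj : Function.Surjective (d₁.prod S₁) :=
    LinearMap.surjective_prod_of_coupled_complexes (d₂ : V₂ →ₗ[ℝ] V₁) (d₁ : V₁ →ₗ[ℝ] W)
      (S₁ : V₁ →ₗ[ℝ] Q) (S₂ : V₂ →ₗ[ℝ] Q₂) (D : Q₂ →ₗ[ℝ] Q) hcomplex hcomm hd₁ hDS₂
  obtain ⟨M, hM, hpre⟩ := d₁.exists_prod_preimage_norm_le S₁ hsurj
  refine ⟨1 / (2 * (M + 1)), by positivity, fun v q => ?_⟩
  by_cases hvq : v = 0 ∧ q = 0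
  · obtain ⟨rfl, rfl⟩ := hvq
    simp only [norm_zero, add_zero, mul_zero, inner_zero_right, zero_div, Real.iSup_const_zero,
      le_refl]
  obtain ⟨τ, rfl, rfl, hτM⟩ := hpre v q
  have hτ : τ ≠ 0 := by rintro rfl; simp at hvq
  calc 1 / (2 * (M + 1)) * (‖d₁ τ‖ + ‖S₁ τ‖)
      ≤ (‖d₁ τ‖ ^ 2 + ‖S₁ τ‖ ^ 2) / √(‖τ‖ ^ 2 + ‖d₁ τ‖ ^ 2) := by
        rw [one_div_mul_eq_div]
        exact div_le_sq_add_sq_div_sqrt (norm_nonneg _) (norm_nonneg _) hM.le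
          (norm_pos_iff.mpr hτ) hτM
    _ = (⟪d₁ τ, d₁ τ⟫ + ⟪S₁ τ, S₁ τ⟫) / √(‖τ‖ ^ 2 + ‖d₁ τ‖ ^ 2) := by
        simp only [real_inner_self_eq_norm_sq]
    _ ≤ _ := le_ciSup (bddAbove_range_inner_div_graphNorm d₁ S₁ _ _) ⟨τ, hτ⟩

/-- Brezzi inf-sup condition (S2) for the continuous mixed problem derived from coupled
Hilbert complexes: under the complex property, the commuting diagram, surjectivity of `d₁`
and surjectivity of `D ∘ S₂`, there is `C > 0` such that for all `v, q` the supremum over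
nonzero `τ` of `(⟨d₁ τ, v⟩ + ⟨S₁ τ, q⟩) / ‖τ‖_V` is at least `C (‖v‖ + ‖q‖)`, where
`‖τ‖_V = √(‖τ‖² + ‖d₁ τ‖²)` is the graph norm. -/
theorem inf_sup_S2_of_coupled_complexes
    {V₂ V₁ W Q Q₂ : Type*}
    [NormedAddCommGroup V₂] [InnerProductSpace ℝ V₂] [CompleteSpace V₂]
    [NormedAddCommGroup V₁] [InnerProductSpace ℝ V₁] [CompleteSpace V₁]
    [NormedAddCommGroup W] [InnerProductSpace ℝ W] [CompleteSpace W]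
    [NormedAddCommGroup Q] [InnerProductSpace ℝ Q] [CompleteSpace Q]
    [NormedAddCommGroup Q₂] [InnerProductSpace ℝ Q₂] [CompleteSpace Q₂]
    (d₂ : V₂ →L[ℝ] V₁) (d₁ : V₁ →L[ℝ] W) (S₁ : V₁ →L[ℝ] Q)
    (S₂ : V₂ →L[ℝ] Q₂) (D : Q₂ →L[ℝ] Q)
    (hcomplex : ∀ x : V₂, d₁ (d₂ x) = 0)
    (hcomm : ∀ x : V₂, S₁ (d₂ x) = D (S₂ x))
    (hd₁ : Function.Surjective d₁)
    (hDS₂ : Function.Surjective (fun x : V₂ => D (S₂ x))) :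
    ∃ C : ℝ, 0 < C ∧ ∀ (v : W) (q : Q),
      C * (‖v‖ + ‖q‖) ≤
        ⨆ τ : {τ : V₁ // τ ≠ 0},
          (⟪d₁ τ.1, v⟫ + ⟪S₁ τ.1, q⟫) / Real.sqrt (‖τ.1‖ ^ 2 + ‖d₁ τ.1‖ ^ 2) :=
  inf_sup_S2_of_coupled_complexes_general d₂ d₁ S₁ S₂ D hcomplex hcomm hd₁ hDS₂
end

section
/- Let V₂, V₁, W, Q, Q₂ be real Hilbert spaces and d₂ : V₂ → V₁, d₁ : V₁ → W, S₁ : V₁ → Q, S₂ : V₂ → Q₂, D : Q₂ → Q continuous linear maps with d₁∘d₂ = 0, S₁∘d₂ = D∘S₂, and d₁ surjective; let C_S ≥ 0 satisfy ‖S₁ τ‖ ≤ C_S √(‖τ‖² + ‖d₁ τ‖²) for all τ ∈ V₁. Let V₂ₕ ⊆ V₂, V₁ₕ ⊆ V₁, Wₕ ⊆ W, Q̄ₕ ⊆ Q be closed subspaces with d₂(V₂ₕ) ⊆ V₁ₕ and d₁(V₁ₕ) ⊆ Wₕ. Assume: (i) there exist linear maps Π₁ : V₁ → V₁ₕ and Π_W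 : W → Wₕ with d₁ ∘ Π₁ = Π_W ∘ d₁ and Π_W w = w for all w ∈ Wₕ; (ii) there is C_P > 0 such that every τ ∈ V₁ₕ that is orthogonal in V₁ to ker d₁ ∩ V₁ₕ satisfies √(‖τ‖² + ‖d₁ τ‖²) ≤ C_P ‖d₁ τ‖; (iii) there is C_IS > 0 such that for every q ∈ Q̄ₕ, the supremum over nonzero w ∈ V₂ₕ of ⟨D S₂ w, q⟩ / √(‖w‖² + ‖d₂ w‖²) is at least C_IS ‖q‖. Let P̄ : Q → Q̄ₕ be the orthogonal projection onto Q̄ₕ. Then for every v ∈ Wₕ and q ∈ Q̄ₕ there exists σ ∈ V₁ₕ with d₁ σ = v, P̄(S₁ σ) = q, and ‖σ‖ + ‖d₁ σ‖ ≤ C₂ (‖v‖ + ‖q‖), where C₂ = 1 + C_P + 1/C_IS + C_P·C_S/C_IS. -/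
open scoped RealInnerProductSpace InnerProduct

/-!
Lift `v` to `V₁ₕ` with the commuting projection and remove its component in `ker d₁ ∩ V₁ₕ`;
the discrete Poincaré inequality bounds the resulting `σ₁` by `C_P ‖v‖`. The residual
`q - P̄ S₁ σ₁` is then corrected by adding `d₂ w`, which leaves `d₁ σ` unchanged since
`d₁ d₂ = 0` and adds `P̄ D S₂ w` by the commuting relation. A suitable `w ∈ V₂ₕ` with
`C_IS ‖w‖_graph ≤ ‖q - P̄ S₁ σ₁‖` exists because, realising `V₂ₕ` with its graph norm as the
graph of `d₂` in `V₂ ⊕₂ V₁`, the inf-sup condition says that the adjoint of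
`w ↦ P̄ D S₂ w` is bounded below by `C_IS`; an operator between Hilbert spaces whose adjoint
is bounded below by `c` is onto, with preimages of norm at most `‖y‖ / c` (Lax–Milgram for
`N N†`).
-/

namespace ContinuousLinearMap

section Graph

variable {E F : Type*} [NormedAddCommGroup E] [InnerProductSpace ℝ E]
  [NormedAddCommGroup F] [InnerProductSpace ℝ F]

noncomputable def graphEmbedding (T : E →L[ℝ] F) : E →L[ℝ] WithLp 2 (E × F) :=
  (WithLp.prodContinuousLinearEquiv 2 ℝ E F).symm.toContinuousLinearMap ∘L
    (ContinuousLinearMap.id ℝ E).prod T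

@[simp]
theorem fst_graphEmbedding (T : E →L[ℝ] F) (x : E) : (T.graphEmbedding x).fst = x := rfl

theorem norm_graphEmbedding (T : E →L[ℝ] F) (x : E) :
    ‖T.graphEmbedding x‖ = √(‖x‖ ^ 2 + ‖T x‖ ^ 2) :=
  WithLp.prod_norm_eq_of_L2 _

theorem antilipschitzWith_graphEmbedding (T : E →L[ℝ] F) : AntilipschitzWith 1 T.graphEmbedding :=
  T.graphEmbedding.antilipschitz_of_bound fun x => by
    rw [NNReal.coe_one, one_mul, norm_graphEmbedding]
    exact Real.le_sqrt_of_sq_le (le_add_of_nonneg_right (sq_nonneg _))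

instance (T : E →L[ℝ] F) (S : Submodule ℝ E) [CompleteSpace S] :
    CompleteSpace (S.map (T.graphEmbedding : E →ₗ[ℝ] WithLp 2 (E × F))) := by
  apply IsComplete.completeSpace_coe
  rw [Submodule.map_coe, ContinuousLinearMap.coe_coe, isComplete_image_iff
    ((antilipschitzWith_graphEmbedding T).isUniformInducing T.graphEmbedding.uniformContinuous)]
  exact completeSpace_coe_iff_isComplete.mp inferInstance

end Graph

section Adjoint

variable {E F : Type*} [NormedAddCommGroup E] [InnerProductSpace ℝ E] [CompleteSpace E]
  [NormedAddCommGroup F] [InnerProductSpace ℝ F] [CompleteSpace F]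

theorem exists_preimage_mul_norm_le_of_le_norm_adjoint (N : E →L[ℝ] F) {c : ℝ} (hc : 0 < c)
    (hN : ∀ y, c * ‖y‖ ≤ ‖(N†) y‖) (y : F) : ∃ x, N x = y ∧ c * ‖x‖ ≤ ‖y‖ := by
  have hform : ∀ r s, (innerSL ℝ).comp (N ∘L N†) r s = ⟪(N†) r, (N†) s⟫ := fun r s => by
    simp [adjoint_inner_right]
  have coercive : IsCoercive ((innerSL ℝ).comp (N ∘L N†)) := by
    refine ⟨c ^ 2, by positivity, fun r => ?_⟩
    rw [hform, real_inner_self_eq_norm_sq]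
    calc c ^ 2 * ‖r‖ * ‖r‖ = (c * ‖r‖) ^ 2 := by ring
      _ ≤ ‖(N†) r‖ ^ 2 := pow_le_pow_left₀ (by positivity) (hN r) 2
  let z := coercive.continuousLinearEquivOfBilin.symm y
  have hz : N ((N†) z) = y := ext_inner_right ℝ fun s => by
    rw [← adjoint_inner_right, ← hform, ← coercive.continuousLinearEquivOfBilin_apply,
      ContinuousLinearEquiv.apply_symm_apply]
  refine ⟨(N†) z, hz, ?_⟩
  have hsq : ‖(N†) z‖ ^ 2 ≤ ‖y‖ * ‖z‖ := by
    rw [← real_inner_self_eq_norm_sq, adjoint_inner_right, hz]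
    exact real_inner_le_norm y z
  rcases (norm_nonneg ((N†) z)).eq_or_lt with hzero | hpos
  · rw [← hzero, mul_zero]
    exact norm_nonneg y
  refine le_of_mul_le_mul_right ?_ hpos
  calc c * ‖(N†) z‖ * ‖(N†) z‖ ≤ c * (‖y‖ * ‖z‖) := by rw [mul_assoc, ← sq]; gcongr
    _ = ‖y‖ * (c * ‖z‖) := by ring
    _ ≤ ‖y‖ * ‖(N†) z‖ := mul_le_mul_of_nonneg_left (hN z) (norm_nonneg y)

end Adjoint

end ContinuousLinearMap

theorem exists_starProjection_eq_of_inf_sup {V₂ V₁ Q : Type*}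
    [NormedAddCommGroup V₂] [InnerProductSpace ℝ V₂] [NormedAddCommGroup V₁]
    [InnerProductSpace ℝ V₁] [NormedAddCommGroup Q] [InnerProductSpace ℝ Q]
    (d₂ : V₂ →L[ℝ] V₁) (M : V₂ →L[ℝ] Q) (V₂h : Submodule ℝ V₂) [CompleteSpace V₂h]
    (Qh : Submodule ℝ Q) [CompleteSpace Qh] {c : ℝ} (hc : 0 < c)
    (hinfsup : ∀ q ∈ Qh, c * ‖q‖ ≤
      ⨆ w : {w : V₂ // w ∈ V₂h ∧ w ≠ 0}, ⟪M w.1, q⟫ / √(‖w.1‖ ^ 2 + ‖d₂ w.1‖ ^ 2))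
    {q : Q} (hq : q ∈ Qh) :
    ∃ w ∈ V₂h, Qh.starProjection (M w) = q ∧ c * √(‖w‖ ^ 2 + ‖d₂ w‖ ^ 2) ≤ ‖q‖ := by
  let G := V₂h.map (d₂.graphEmbedding : V₂ →ₗ[ℝ] WithLp 2 (V₂ × V₁))
  let N : G →L[ℝ] Qh := Qh.orthogonalProjectionOnto ∘L M ∘L WithLp.fstL 2 ℝ V₂ V₁ ∘L G.subtypeL
  have hadj : ∀ r : Qh, c * ‖r‖ ≤ ‖(N†) r‖ := fun r => by
    refine (hinfsup r r.2).trans (Real.iSup_le (fun ⟨w, hw, hw0⟩ => ?_) (norm_nonneg _))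
    have hpos : 0 < √(‖w‖ ^ 2 + ‖d₂ w‖ ^ 2) := Real.sqrt_pos.mpr (by positivity)
    rw [div_le_iff₀ hpos, ← d₂.norm_graphEmbedding, mul_comm]
    calc ⟪M w, r⟫ = ⟪(⟨d₂.graphEmbedding w, w, hw, rfl⟩ : G), (N†) r⟫ := by
          simp [ContinuousLinearMap.adjoint_inner_right, N]
      _ ≤ ‖d₂.graphEmbedding w‖ * ‖(N†) r‖ := real_inner_le_norm _ _
  obtain ⟨⟨_, w, hw, rfl⟩, hNw, hbound⟩ :=
    N.exists_preimage_mul_norm_le_of_le_norm_adjoint hc hadj ⟨q, hq⟩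
  refine ⟨w, hw, ?_, ?_⟩
  · simpa [N] using congrArg Subtype.val hNw
  · simpa [d₂.norm_graphEmbedding] using hbound

theorem exists_mem_map_eq_orthogonal_inf_ker {V W : Type*} [NormedAddCommGroup V]
    [InnerProductSpace ℝ V] [CompleteSpace V] [NormedAddCommGroup W] [NormedSpace ℝ W]
    (d : V →L[ℝ] W) {Vh : Submodule ℝ V} (hVh : IsClosed (Vh : Set V)) {τ : V} (hτ : τ ∈ Vh) :
    ∃ σ ∈ Vh, d σ = d τ ∧ ∀ κ ∈ Vh, d κ = 0 → ⟪σ, κ⟫ = 0 := by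
  let Z := Vh ⊓ LinearMap.ker (d : V →ₗ[ℝ] W)
  have : CompleteSpace Z := (hVh.inter d.isClosed_ker).completeSpace_coe
  have hproj : Z.starProjection τ ∈ Z := Z.starProjection_apply_mem τ
  refine ⟨τ - Z.starProjection τ, Vh.sub_mem hτ hproj.1, ?_, fun κ hκ hdκ => ?_⟩
  · rw [map_sub, show d (Z.starProjection τ) = 0 from hproj.2, sub_zero]
  · exact Z.sub_starProjection_mem_orthogonal τ κ ⟨hκ, hdκ⟩ |> (real_inner_comm _ _).trans

theorem add_add_le_mul_of_le_of_mul_le {s t a b C_P C_S C_IS : ℝ} (hCP : 0 ≤ C_P)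
    (hCS : 0 ≤ C_S) (hCIS : 0 < C_IS) (ha : 0 ≤ a) (hb : 0 ≤ b) (hs : s ≤ C_P * a)
    (ht : C_IS * t ≤ b + C_S * (C_P * a)) :
    s + t + a ≤ (1 + C_P + 1 / C_IS + C_P * C_S / C_IS) * (a + b) := by
  have ht' : t ≤ (b + C_S * (C_P * a)) / C_IS := by rwa [le_div_iff₀ hCIS, mul_comm]
  have hslack : 0 ≤ (1 + C_P + C_P * C_S / C_IS) * b + 1 / C_IS * a := by positivity
  calc s + t + a ≤ C_P * a + (b + C_S * (C_P * a)) / C_IS + a := by gcongr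
    _ = (1 + C_P + 1 / C_IS + C_P * C_S / C_IS) * (a + b)
          - ((1 + C_P + C_P * C_S / C_IS) * b + 1 / C_IS * a) := by
        field_simp
        ring
    _ ≤ _ := sub_le_self _ hslack

theorem discrete_inf_sup_S2_general
    {V₂ V₁ W Q Q₂ : Type*}
    [NormedAddCommGroup V₂] [InnerProductSpace ℝ V₂] [CompleteSpace V₂]
    [NormedAddCommGroup V₁] [InnerProductSpace ℝ V₁] [CompleteSpace V₁]
    [NormedAddCommGroup W] [InnerProductSpace ℝ W]
    [NormedAddCommGroup Q] [InnerProductSpace ℝ Q] [CompleteSpace Q]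
    [NormedAddCommGroup Q₂] [InnerProductSpace ℝ Q₂]
    (d₂ : V₂ →L[ℝ] V₁) (d₁ : V₁ →L[ℝ] W) (S₁ : V₁ →L[ℝ] Q)
    (S₂ : V₂ →L[ℝ] Q₂) (D : Q₂ →L[ℝ] Q)
    (hcomplex : ∀ x : V₂, d₁ (d₂ x) = 0)
    (hcomm : ∀ x : V₂, S₁ (d₂ x) = D (S₂ x))
    (hd₁surj : Function.Surjective d₁)
    (C_S : ℝ) (hCS : 0 ≤ C_S)
    (hS₁bound : ∀ τ : V₁, ‖S₁ τ‖ ≤ C_S * Real.sqrt (‖τ‖ ^ 2 + ‖d₁ τ‖ ^ 2))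
    (V₂h : Submodule ℝ V₂) (V₁h : Submodule ℝ V₁) (Wh : Submodule ℝ W)
    (Qh : Submodule ℝ Q)
    (hV₂c : IsClosed (V₂h : Set V₂)) (hV₁c : IsClosed (V₁h : Set V₁))
    (hQc : IsClosed (Qh : Set Q))
    (hd₂sub : ∀ x ∈ V₂h, d₂ x ∈ V₁h)
    -- (i) commuting cochain projections
    (Pi₁ : V₁ →ₗ[ℝ] V₁) (PiW : W →ₗ[ℝ] W)
    (hPi₁mem : ∀ τ : V₁, Pi₁ τ ∈ V₁h)
    (hcochain : ∀ τ : V₁, d₁ (Pi₁ τ) = PiW (d₁ τ))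
    (hPiWid : ∀ w ∈ Wh, PiW w = w)
    -- (ii) discrete Poincaré inequality
    (C_P : ℝ) (hCP : 0 < C_P)
    (hPoincare : ∀ τ ∈ V₁h, (∀ κ ∈ V₁h, d₁ κ = 0 → ⟪τ, κ⟫ = 0) →
      Real.sqrt (‖τ‖ ^ 2 + ‖d₁ τ‖ ^ 2) ≤ C_P * ‖d₁ τ‖)
    -- (iii) discrete auxiliary inf-sup condition
    (C_IS : ℝ) (hCIS : 0 < C_IS)
    (hinfsup : ∀ q ∈ Qh, C_IS * ‖q‖ ≤
      ⨆ w : {w : V₂ // w ∈ V₂h ∧ w ≠ 0},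
        ⟪D (S₂ w.1), q⟫ / Real.sqrt (‖w.1‖ ^ 2 + ‖d₂ w.1‖ ^ 2))
    -- the orthogonal projection onto Q̄ₕ
    (Pbar : Q →ₗ[ℝ] Q) (hPmem : ∀ q : Q, Pbar q ∈ Qh)
    (hPorth : ∀ q : Q, ∀ r ∈ Qh, ⟪q - Pbar q, r⟫ = 0) :
    ∀ v ∈ Wh, ∀ q ∈ Qh, ∃ σ ∈ V₁h, d₁ σ = v ∧ Pbar (S₁ σ) = q ∧
      ‖σ‖ + ‖d₁ σ‖ ≤ (1 + C_P + 1 / C_IS + C_P * C_S / C_IS) * (‖v‖ + ‖q‖) := by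
  intro v hv q hq
  have : CompleteSpace V₂h := hV₂c.completeSpace_coe
  have : CompleteSpace Qh := hQc.completeSpace_coe
  have hPbar : ∀ x, Pbar x = Qh.starProjection x := fun x =>
    (Qh.eq_starProjection_of_mem_of_inner_eq_zero (hPmem x) (hPorth x)).symm
  obtain ⟨τ, hτ⟩ := hd₁surj v
  obtain ⟨σ₁, hσ₁, hdσ₁, hσ₁perp⟩ := exists_mem_map_eq_orthogonal_inf_ker d₁ hV₁c (hPi₁mem τ)
  rw [hcochain, hτ, hPiWid v hv] at hdσ₁
  have hσ₁bound : √(‖σ₁‖ ^ 2 + ‖d₁ σ₁‖ ^ 2) ≤ C_P * ‖v‖ := hdσ₁ ▸ hPoincare σ₁ hσ₁ hσ₁perp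
  obtain ⟨w, hw, hPw, hwbound⟩ := exists_starProjection_eq_of_inf_sup d₂ (D ∘L S₂) V₂h Qh hCIS
    hinfsup (Qh.sub_mem hq (hPmem (S₁ σ₁)))
  have hdσ : d₁ (σ₁ + d₂ w) = v := by rw [map_add, hdσ₁, hcomplex, add_zero]
  refine ⟨σ₁ + d₂ w, V₁h.add_mem hσ₁ (hd₂sub w hw), hdσ, ?_, ?_⟩
  · rw [map_add, hcomm, map_add, hPbar (D (S₂ w))]
    simp only [ContinuousLinearMap.comp_apply] at hPw
    rw [hPw, add_sub_cancel]
  · have hσ₁norm : ‖σ₁‖ ≤ C_P * ‖v‖ :=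
      (Real.le_sqrt_of_sq_le (le_add_of_nonneg_right (sq_nonneg _))).trans hσ₁bound
    have hS₁σ₁ : ‖S₁ σ₁‖ ≤ C_S * (C_P * ‖v‖) :=
      (hS₁bound σ₁).trans (mul_le_mul_of_nonneg_left hσ₁bound hCS)
    have hd₂w : C_IS * ‖d₂ w‖ ≤ ‖q‖ + C_S * (C_P * ‖v‖) := calc
      C_IS * ‖d₂ w‖ ≤ C_IS * √(‖w‖ ^ 2 + ‖d₂ w‖ ^ 2) :=
          mul_le_mul_of_nonneg_left
            (Real.le_sqrt_of_sq_le (le_add_of_nonneg_left (sq_nonneg _))) hCIS.le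
      _ ≤ ‖q - Pbar (S₁ σ₁)‖ := hwbound
      _ ≤ ‖q‖ + ‖S₁ σ₁‖ := by
          rw [hPbar]
          exact (norm_sub_le _ _).trans (by gcongr; exact Qh.norm_starProjection_apply_le _)
      _ ≤ ‖q‖ + C_S * (C_P * ‖v‖) := by gcongr
    calc ‖σ₁ + d₂ w‖ + ‖d₁ (σ₁ + d₂ w)‖ ≤ ‖σ₁‖ + ‖d₂ w‖ + ‖v‖ := by
          rw [hdσ]; gcongr; exact norm_add_le _ _
      _ ≤ _ := add_add_le_mul_of_le_of_mul_le hCP.le hCS hCIS (norm_nonneg _) (norm_nonneg _)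
          hσ₁norm hd₂w

/-- Discrete Brezzi inf-sup condition (S2): under the subcomplex property, commuting
cochain projections, the discrete Poincaré inequality and the discrete auxiliary inf-sup
condition, for every discrete `v ∈ Wₕ`, `q ∈ Q̄ₕ` there exists `σ ∈ V₁ₕ` with `d₁ σ = v`,
`P̄ (S₁ σ) = q` and `‖σ‖ + ‖d₁ σ‖ ≤ C₂ (‖v‖ + ‖q‖)`. -/
theorem discrete_inf_sup_S2
    {V₂ V₁ W Q Q₂ : Type*}
    [NormedAddCommGroup V₂] [InnerProductSpace ℝ V₂] [CompleteSpace V₂]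
    [NormedAddCommGroup V₁] [InnerProductSpace ℝ V₁] [CompleteSpace V₁]
    [NormedAddCommGroup W] [InnerProductSpace ℝ W] [CompleteSpace W]
    [NormedAddCommGroup Q] [InnerProductSpace ℝ Q] [CompleteSpace Q]
    [NormedAddCommGroup Q₂] [InnerProductSpace ℝ Q₂] [CompleteSpace Q₂]
    (d₂ : V₂ →L[ℝ] V₁) (d₁ : V₁ →L[ℝ] W) (S₁ : V₁ →L[ℝ] Q)
    (S₂ : V₂ →L[ℝ] Q₂) (D : Q₂ →L[ℝ] Q)
    (hcomplex : ∀ x : V₂, d₁ (d₂ x) = 0)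
    (hcomm : ∀ x : V₂, S₁ (d₂ x) = D (S₂ x))
    (hd₁surj : Function.Surjective d₁)
    (C_S : ℝ) (hCS : 0 ≤ C_S)
    (hS₁bound : ∀ τ : V₁, ‖S₁ τ‖ ≤ C_S * Real.sqrt (‖τ‖ ^ 2 + ‖d₁ τ‖ ^ 2))
    (V₂h : Submodule ℝ V₂) (V₁h : Submodule ℝ V₁) (Wh : Submodule ℝ W)
    (Qh : Submodule ℝ Q)
    (hV₂c : IsClosed (V₂h : Set V₂)) (hV₁c : IsClosed (V₁h : Set V₁))
    (hWc : IsClosed (Wh : Set W)) (hQc : IsClosed (Qh : Set Q))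
    (hd₂sub : ∀ x ∈ V₂h, d₂ x ∈ V₁h) (hd₁sub : ∀ x ∈ V₁h, d₁ x ∈ Wh)
    -- (i) commuting cochain projections
    (Pi₁ : V₁ →ₗ[ℝ] V₁) (PiW : W →ₗ[ℝ] W)
    (hPi₁mem : ∀ τ : V₁, Pi₁ τ ∈ V₁h) (hPiWmem : ∀ w : W, PiW w ∈ Wh)
    (hcochain : ∀ τ : V₁, d₁ (Pi₁ τ) = PiW (d₁ τ))
    (hPiWid : ∀ w ∈ Wh, PiW w = w)
    -- (ii) discrete Poincaré inequality
    (C_P : ℝ) (hCP : 0 < C_P)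
    (hPoincare : ∀ τ ∈ V₁h, (∀ κ ∈ V₁h, d₁ κ = 0 → ⟪τ, κ⟫ = 0) →
      Real.sqrt (‖τ‖ ^ 2 + ‖d₁ τ‖ ^ 2) ≤ C_P * ‖d₁ τ‖)
    -- (iii) discrete auxiliary inf-sup condition
    (C_IS : ℝ) (hCIS : 0 < C_IS)
    (hinfsup : ∀ q ∈ Qh, C_IS * ‖q‖ ≤
      ⨆ w : {w : V₂ // w ∈ V₂h ∧ w ≠ 0},
        ⟪D (S₂ w.1), q⟫ / Real.sqrt (‖w.1‖ ^ 2 + ‖d₂ w.1‖ ^ 2))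
    -- the orthogonal projection onto Q̄ₕ
    (Pbar : Q →ₗ[ℝ] Q) (hPmem : ∀ q : Q, Pbar q ∈ Qh)
    (hPorth : ∀ q : Q, ∀ r ∈ Qh, ⟪q - Pbar q, r⟫ = 0) :
    ∀ v ∈ Wh, ∀ q ∈ Qh, ∃ σ ∈ V₁h, d₁ σ = v ∧ Pbar (S₁ σ) = q ∧
      ‖σ‖ + ‖d₁ σ‖ ≤ (1 + C_P + 1 / C_IS + C_P * C_S / C_IS) * (‖v‖ + ‖q‖) :=
  discrete_inf_sup_S2_general d₂ d₁ S₁ S₂ D hcomplex hcomm hd₁surj C_S hCS hS₁bound V₂h V₁h Wh Qh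
    hV₂c hV₁c hQc hd₂sub Pi₁ PiW hPi₁mem hcochain hPiWid C_P hCP hPoincare C_IS hCIS hinfsup Pbar
    hPmem hPorth
end

section
/- Let w : ℝ³ → ℝ^{3×3} be a matrix field all of whose entries are differentiable at a point x ∈ ℝ³. Define pointwise Ξw = wᵀ − tr(w)·I, the row-wise divergence of a matrix field M by (∇·M)ᵢ = Σⱼ ∂ⱼ Mᵢⱼ, the row-wise curl of M as the matrix whose i-th row is (∂₂Mᵢ₃ − ∂₃Mᵢ₂, ∂₃Mᵢ₁ − ∂₁Mᵢ₃, ∂₁Mᵢ₂ − ∂₂Mᵢ₁), and Skew(M) := (M₃₂ − M₂₃, M₁₃ − M₃₁, M₂₁ − M₁₂) ∈ ℝ³. Then (∇·(Ξw))(x) = Skew((∇×w)(x)). -/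
open Matrix

/-- Partial derivative of a scalar function on `ℝ³` in the `j`-th coordinate direction. -/
noncomputable def pd3 (f : (Fin 3 → ℝ) → ℝ) (j : Fin 3) (x : Fin 3 → ℝ) : ℝ :=
  fderiv ℝ f x (Pi.single j 1)

/-- `Ξ M = Mᵀ − tr(M)·I` for a 3×3 matrix. -/
def Xi3 (M : Matrix (Fin 3) (Fin 3) ℝ) : Matrix (Fin 3) (Fin 3) ℝ :=
  Mᵀ - Matrix.trace M • (1 : Matrix (Fin 3) (Fin 3) ℝ)

/-- Row-wise divergence of a matrix field: `(∇·M)ᵢ = Σⱼ ∂ⱼ Mᵢⱼ`. -/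
noncomputable def mdiv3 (M : (Fin 3 → ℝ) → Matrix (Fin 3) (Fin 3) ℝ)
    (x : Fin 3 → ℝ) : Fin 3 → ℝ :=
  fun i => ∑ j : Fin 3, pd3 (fun y => M y i j) j x

/-- Row-wise curl of a matrix field: the `i`-th row is
`(∂₂Mᵢ₃ − ∂₃Mᵢ₂, ∂₃Mᵢ₁ − ∂₁Mᵢ₃, ∂₁Mᵢ₂ − ∂₂Mᵢ₁)`. -/
noncomputable def mcurl3 (M : (Fin 3 → ℝ) → Matrix (Fin 3) (Fin 3) ℝ)
    (x : Fin 3 → ℝ) : Matrix (Fin 3) (Fin 3) ℝ :=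
  Matrix.of fun i =>
    ![pd3 (fun y => M y i 2) 1 x - pd3 (fun y => M y i 1) 2 x,
      pd3 (fun y => M y i 0) 2 x - pd3 (fun y => M y i 2) 0 x,
      pd3 (fun y => M y i 1) 0 x - pd3 (fun y => M y i 0) 1 x]

/-- `Skew(M) = (M₃₂ − M₂₃, M₁₃ − M₃₁, M₂₁ − M₁₂) ∈ ℝ³`. -/
def skew3 (M : Matrix (Fin 3) (Fin 3) ℝ) : Fin 3 → ℝ :=
  ![M 2 1 - M 1 2, M 0 2 - M 2 0, M 1 0 - M 0 1]

/-!
Both sides equal `∇·wᵀ − ∇ tr w`. For the divergence this is linearity of differentiation, since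
`(Ξw)ᵢⱼ = wⱼᵢ − tr(w) δᵢⱼ`; for `Skew(∇×w)` it is a rearrangement of the six partial derivatives
it involves, adding and subtracting `∂ᵢwᵢᵢ`.
-/

section PartialDerivative

variable {f g : (Fin 3 → ℝ) → ℝ} {j : Fin 3} {x : Fin 3 → ℝ}

theorem pd3_sub (hf : DifferentiableAt ℝ f x) (hg : DifferentiableAt ℝ g x) :
    pd3 (fun y => f y - g y) j x = pd3 f j x - pd3 g j x := by
  simp only [pd3, fderiv_fun_sub hf hg, _root_.sub_apply]

theorem pd3_mul_const (hf : DifferentiableAt ℝ f x) (c : ℝ) :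
    pd3 (fun y => f y * c) j x = pd3 f j x * c := by
  rw [pd3, pd3, fderiv_mul_const hf, _root_.smul_apply, smul_eq_mul, mul_comm]

theorem pd3_sum {ι : Type*} (s : Finset ι) {F : ι → (Fin 3 → ℝ) → ℝ}
    (hF : ∀ k ∈ s, DifferentiableAt ℝ (F k) x) :
    pd3 (fun y => ∑ k ∈ s, F k y) j x = ∑ k ∈ s, pd3 (F k) j x := by
  simp only [pd3, fderiv_fun_sum hF, _root_.sum_apply]

end PartialDerivative

section MatrixField

variable {w : (Fin 3 → ℝ) → Matrix (Fin 3) (Fin 3) ℝ} {x : Fin 3 → ℝ}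

theorem Xi3_apply (M : Matrix (Fin 3) (Fin 3) ℝ) (i j : Fin 3) :
    Xi3 M i j = M j i - M.trace * (1 : Matrix (Fin 3) (Fin 3) ℝ) i j := by
  simp [Xi3]

theorem pd3_trace (hw : ∀ k : Fin 3, DifferentiableAt ℝ (fun y => w y k k) x) (j : Fin 3) :
    pd3 (fun y => (w y).trace) j x = ∑ k, pd3 (fun y => w y k k) j x :=
  pd3_sum Finset.univ fun k _ => hw k

theorem mdiv3_Xi3 (hw : ∀ i k : Fin 3, DifferentiableAt ℝ (fun y => w y i k) x) (i : Fin 3) :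
    mdiv3 (fun y => Xi3 (w y)) x i =
      ∑ j, pd3 (fun y => w y j i) j x - pd3 (fun y => (w y).trace) i x := by
  have htrace : DifferentiableAt ℝ (fun y => (w y).trace) x :=
    DifferentiableAt.fun_sum fun k _ => hw k k
  have hentry (j : Fin 3) : pd3 (fun y => Xi3 (w y) i j) j x =
      pd3 (fun y => w y j i) j x - pd3 (fun y => (w y).trace) j x * (1 : Matrix _ _ ℝ) i j := by
    simp only [Xi3_apply]
    rw [pd3_sub (hw j i) (htrace.mul_const _), pd3_mul_const htrace]
  simp [mdiv3, hentry, Matrix.one_apply]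

theorem skew3_mcurl3 (i : Fin 3) :
    skew3 (mcurl3 w x) i =
      ∑ j, pd3 (fun y => w y j i) j x - ∑ k, pd3 (fun y => w y k k) i x := by
  fin_cases i <;> simp [skew3, mcurl3, Fin.sum_univ_three] <;> ring

end MatrixField

/-- 3D commutativity relation of the coupled de Rham complexes for linear elasticity:
`∇·(Ξ w) = Skew(∇×w)` at every point where all entries of `w` are differentiable. -/
theorem div_Xi_eq_skew_curl (w : (Fin 3 → ℝ) → Matrix (Fin 3) (Fin 3) ℝ)
    (x : Fin 3 → ℝ)
    (hw : ∀ i k : Fin 3, DifferentiableAt ℝ (fun y => w y i k) x) :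
    mdiv3 (fun y => Xi3 (w y)) x = skew3 (mcurl3 w x) := by
  funext i
  rw [mdiv3_Xi3 hw, pd3_trace fun k => hw k k, skew3_mcurl3]
end

section
/- Let F : ℝ² → ℝ² be twice continuously differentiable with Jacobian matrix J(x̂) = DF(x̂) invertible for every x̂ ∈ ℝ², and let v : ℝ² → ℝ² be continuously differentiable. Define the Piola transform 𝒴₂(v)(x̂) = det(J(x̂)) · J(x̂)⁻¹ · v(F(x̂)). Then for every x̂ ∈ ℝ²: (∇·(𝒴₂(v)))(x̂) = det(J(x̂)) · (∇·v)(F(x̂)), where ∇· is the divergence ∇·u = ∂₁u₁ + ∂₂u₂. -/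
open Matrix

/-- Jacobian matrix of a map `F : ℝ² → ℝ²`: `J(x̂)ᵢⱼ = ∂ⱼ Fᵢ (x̂)`. -/
noncomputable def jac2 (F : (Fin 2 → ℝ) → (Fin 2 → ℝ)) (x : Fin 2 → ℝ) :
    Matrix (Fin 2) (Fin 2) ℝ :=
  Matrix.of fun i j => fderiv ℝ F x (Pi.single j 1) i

/-- Divergence of a vector field on `ℝ²`: `∇·u = ∂₁u₁ + ∂₂u₂`. -/
noncomputable def div2 (u : (Fin 2 → ℝ) → (Fin 2 → ℝ)) (x : Fin 2 → ℝ) : ℝ :=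
  ∑ i : Fin 2, fderiv ℝ (fun y => u y i) x (Pi.single i 1)

/-- The Piola transform `𝒴₂(v)(x̂) = det(J(x̂)) · J(x̂)⁻¹ · v(F(x̂))`. -/
noncomputable def piola2 (F v : (Fin 2 → ℝ) → (Fin 2 → ℝ)) (x : Fin 2 → ℝ) :
    Fin 2 → ℝ :=
  (jac2 F x).det • ((jac2 F x)⁻¹ *ᵥ v (F x))

/-!
Where `J` is invertible, `𝒴₂ v = adj(J) (v ∘ F)`, and the product rule gives
`∇·(adj(J) w) = (∇·adj J) · w + tr(adj(J) Dw)`. The first term vanishes: the columns of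
`adj J = [[∂₂F₂, -∂₂F₁], [-∂₁F₂, ∂₁F₁]]` are divergence free because second derivatives of `F`
commute (the Piola identity). For `w = v ∘ F` the chain rule gives `Dw = Dv(F) J`, and
`tr(adj(J) Dv(F) J) = tr(J adj(J) Dv(F)) = det J · (∇·v)(F)`.
-/

variable {F u v w : (Fin 2 → ℝ) → (Fin 2 → ℝ)} {x : Fin 2 → ℝ}

theorem Matrix.trace_adjugate_mul_mul_self {n α : Type*} [Fintype n] [DecidableEq n]
    [CommRing α] (A B : Matrix n n α) : (A.adjugate * (B * A)).trace = A.det * B.trace := by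
  rw [trace_mul_comm, Matrix.mul_assoc, mul_adjugate, Matrix.mul_smul, Matrix.mul_one, trace_smul,
    smul_eq_mul]

theorem jac2_eq_toMatrix' (F : (Fin 2 → ℝ) → (Fin 2 → ℝ)) (x : Fin 2 → ℝ) :
    jac2 F x = LinearMap.toMatrix' (fderiv ℝ F x : (Fin 2 → ℝ) →ₗ[ℝ] Fin 2 → ℝ) := by
  ext i j
  simp [jac2, LinearMap.toMatrix'_apply]

theorem jac2_comp (hv : DifferentiableAt ℝ v (F x)) (hF : DifferentiableAt ℝ F x) :
    jac2 (fun y => v (F y)) x = jac2 v (F x) * jac2 F x := by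
  rw [jac2_eq_toMatrix', jac2_eq_toMatrix', jac2_eq_toMatrix', ← LinearMap.toMatrix'_mul,
    fderiv_fun_comp x hv hF]
  rfl

theorem div2_eq_trace_jac2 (hu : DifferentiableAt ℝ u x) : div2 u x = (jac2 u x).trace := by
  simp [div2, trace, jac2, fderiv_apply hu]

theorem piola2_eq_adjugate_mulVec (hJ : IsUnit (jac2 F x)) :
    piola2 F v x = (jac2 F x).adjugate *ᵥ v (F x) := by
  rw [piola2, inv_def, smul_mulVec, smul_smul,
    Ring.mul_inverse_cancel _ ((isUnit_iff_isUnit_det _).mp hJ), one_smul]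

noncomputable def colDiv2 (M : (Fin 2 → ℝ) → Matrix (Fin 2) (Fin 2) ℝ) (x : Fin 2 → ℝ) :
    Fin 2 → ℝ :=
  fun j => div2 (fun y => (M y)ᵀ j) x

theorem div2_mulVec {M : (Fin 2 → ℝ) → Matrix (Fin 2) (Fin 2) ℝ}
    (hM : ∀ i j, DifferentiableAt ℝ (fun y => M y i j) x) (hw : DifferentiableAt ℝ w x) :
    div2 (fun y => M y *ᵥ w y) x = colDiv2 M x ⬝ᵥ w x + (M x * jac2 w x).trace := by
  have hwi : ∀ j, DifferentiableAt ℝ (fun y => w y j) x := differentiableAt_pi.1 hw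
  have hprod : ∀ i, fderiv ℝ (fun y => ∑ j, M y i j * w y j) x (Pi.single i 1) =
      ∑ j, (fderiv ℝ (fun y => M y i j) x (Pi.single i 1) * w x j +
        M x i j * fderiv ℝ (fun y => w y j) x (Pi.single i 1)) := fun i => by
    rw [fderiv_fun_sum fun j _ => (hM i j).fun_mul (hwi j), _root_.sum_apply]
    refine Finset.sum_congr rfl fun j _ => ?_
    rw [fderiv_fun_mul (hM i j) (hwi j)]
    simp only [_root_.add_apply, _root_.smul_apply, smul_eq_mul]
    ring
  simp only [div2, colDiv2, mulVec, dotProduct, hprod, Finset.sum_add_distrib, Finset.sum_mul,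
    trace, diag, mul_apply, jac2, of_apply, transpose_apply, fderiv_apply hw]
  exact congrArg₂ (· + ·) Finset.sum_comm rfl

theorem hasFDerivAt_jac2_apply (hF : DifferentiableAt ℝ (fderiv ℝ F) x) (i j : Fin 2) :
    HasFDerivAt (fun y => jac2 F y i j)
      ((ContinuousLinearMap.proj i).comp
        ((ContinuousLinearMap.apply ℝ _ (Pi.single j 1)).comp (fderiv ℝ (fderiv ℝ F) x))) x := by
  have h := ((ContinuousLinearMap.proj i).comp
    (ContinuousLinearMap.apply ℝ (Fin 2 → ℝ) (Pi.single j 1))).hasFDerivAt.comp x hF.hasFDerivAt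
  exact h

theorem differentiableAt_adjugate_jac2_apply (hF : DifferentiableAt ℝ (fderiv ℝ F) x)
    (i j : Fin 2) : DifferentiableAt ℝ (fun y => (jac2 F y).adjugate i j) x := by
  have h := fun i j => (hasFDerivAt_jac2_apply hF i j).differentiableAt
  fin_cases i <;> fin_cases j <;> simp [adjugate_fin_two, h]

theorem colDiv2_adjugate_jac2 (hF : ContDiffAt ℝ 2 F x) :
    colDiv2 (fun y => (jac2 F y).adjugate) x = 0 := by
  have hsymm := hF.isSymmSndFDerivAt (by simp)
  have hF' : DifferentiableAt ℝ (fderiv ℝ F) x :=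
    (hF.fderiv_right le_rfl).differentiableAt one_ne_zero
  funext j
  fin_cases j <;> simp [colDiv2, div2, adjugate_fin_two, Fin.sum_univ_two,
    (hasFDerivAt_jac2_apply hF' _ _).fderiv, hsymm (Pi.single 0 1) (Pi.single 1 1)]

/-- The Piola transform intertwines the divergence:
`∇·(𝒴₂ v)(x̂) = det(J(x̂)) · (∇·v)(F(x̂))` for `F` of class `C²` with invertible Jacobian
and `v` of class `C¹`. -/
theorem div_piola2 (F v : (Fin 2 → ℝ) → (Fin 2 → ℝ))
    (hF : ContDiff ℝ 2 F) (hJ : ∀ x : Fin 2 → ℝ, IsUnit (jac2 F x))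
    (hv : ContDiff ℝ 1 v) :
    ∀ x : Fin 2 → ℝ, div2 (fun y => piola2 F v y) x = (jac2 F x).det * div2 v (F x) := by
  intro x
  have hFx : DifferentiableAt ℝ F x := hF.differentiable two_ne_zero x
  have hvF : DifferentiableAt ℝ v (F x) := hv.differentiable one_ne_zero _
  have hadj := differentiableAt_adjugate_jac2_apply
    ((hF.fderiv_right le_rfl).differentiable one_ne_zero x)
  have hpiola : (fun y => piola2 F v y) = fun y => (jac2 F y).adjugate *ᵥ v (F y) :=
    funext fun y => piola2_eq_adjugate_mulVec (hJ y)
  rw [hpiola, div2_mulVec (w := fun y => v (F y)) hadj (hvF.comp x hFx),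
    colDiv2_adjugate_jac2 hF.contDiffAt, zero_dotProduct, zero_add, jac2_comp hvF hFx,
    trace_adjugate_mul_mul_self, div2_eq_trace_jac2 hvF]
end

section
/- Let X and Z be real Hilbert spaces, B : X → Z a continuous linear map, N : Z → ℝ a nonnegative function, and α, β, C_V > 0 constants. Suppose that for every q ∈ Z one has both: the supremum over nonzero x ∈ X of ⟨B x, q⟩ / ‖x‖ is at least α ‖q‖ − β N(q); and the same supremum is at least C_V · N(q). Then for every q ∈ Z the supremum over nonzero x ∈ X of ⟨B x, q⟩ / ‖x‖ is at least (α C_V / (C_V + β)) ‖q‖. -/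
open scoped RealInnerProductSpace

/-- Verfürth's trick: if for all `q` the supremum `sup_{x ≠ 0} ⟨B x, q⟩/‖x‖` is at least
`α ‖q‖ − β N(q)` and also at least `C_V N(q)`, then it is at least
`(α C_V / (C_V + β)) ‖q‖`. -/
theorem verfuerth_trick
    {X Z : Type*} [NormedAddCommGroup X] [InnerProductSpace ℝ X] [CompleteSpace X]
    [NormedAddCommGroup Z] [InnerProductSpace ℝ Z] [CompleteSpace Z]
    (B : X →L[ℝ] Z) (N : Z → ℝ) (hN : ∀ q : Z, 0 ≤ N q)
    (α β C_V : ℝ) (hα : 0 < α) (hβ : 0 < β) (hCV : 0 < C_V)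
    (h1 : ∀ q : Z, α * ‖q‖ - β * N q ≤ ⨆ x : {x : X // x ≠ 0}, ⟪B x.1, q⟫ / ‖x.1‖)
    (h2 : ∀ q : Z, C_V * N q ≤ ⨆ x : {x : X // x ≠ 0}, ⟪B x.1, q⟫ / ‖x.1‖) :
    ∀ q : Z, (α * C_V / (C_V + β)) * ‖q‖ ≤
      ⨆ x : {x : X // x ≠ 0}, ⟪B x.1, q⟫ / ‖x.1‖ := by
  intro q
  have h1' := h1 q
  have h2' := h2 q
  set s := ⨆ x : {x : X // x ≠ 0}, ⟪B x.1, q⟫ / ‖x.1‖ with hs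
  rw [div_mul_eq_mul_div, div_le_iff₀ (by positivity)]
  nlinarith [hN q, norm_nonneg q]
end

section
/- Let X and Q be real Hilbert spaces, T : X → Q a continuous linear map, and Q̄ ⊆ Q a closed subspace; write each q ∈ Q as q = q̃ + q̄ with q̄ the orthogonal projection of q onto Q̄ and q̃ ∈ Q̄⊥. Let C_IS > 0, C₀ ≥ 1, and 0 ≤ ε ≤ min{C_IS, 1}/5 be constants. Assume: (i) for every q̃ ∈ Q̄⊥ there exists τ ∈ X with ‖τ‖ ≤ ‖q̃‖, ⟨T τ, q̃⟩ ≥ C_IS ‖q̃‖², and ⟨T τ, r⟩ = 0 for all r ∈ Q̄; (ii) for every q̄ ∈ Q̄ there exists m ∈ X with ‖m‖ ≤ C₀ ‖q̄‖ and ‖T m − q̄‖ ≤ ε ‖q̄‖. Then for every q ∈ Q the supremum over nonzero σ ∈ X of ⟨T σ, q⟩ / ‖σ‖ is at least C′ ‖q‖, where C′ = min{(9/10) C_IS, 7/10} / (2 C₀). -/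
/-!
Split `q = q̄ + q̃` orthogonally and test with `σ = m + τ`, where `m` approximately inverts `T`
on `q̄` by (ii) and `τ` realises the inf-sup condition (i) for `q̃`. Since `T τ ⟂ Q̄`,
`⟪T σ, q⟫ ≥ ‖q̄‖² - ε ‖q̄‖ (‖q̄‖ + ‖q̃‖) + C_IS ‖q̃‖²`, and the smallness of `ε` makes this at
least `min{(9/10) C_IS, 7/10} ‖q‖²`, while `‖σ‖ ≤ 2 C₀ ‖q‖`.
-/

open scoped RealInnerProductSpace

section InfSup

variable {X Q : Type*} [NormedAddCommGroup X] [InnerProductSpace ℝ X]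
  [NormedAddCommGroup Q] [InnerProductSpace ℝ Q]

theorem le_iSup_inner_div_norm (T : X →L[ℝ] Q) (q : Q) {σ : X} (hσ : σ ≠ 0) :
    ⟪T σ, q⟫ / ‖σ‖ ≤ ⨆ σ : {σ : X // σ ≠ 0}, ⟪T σ.1, q⟫ / ‖σ.1‖ := by
  refine le_ciSup (f := fun σ : {σ : X // σ ≠ 0} ↦ ⟪T σ.1, q⟫ / ‖σ.1‖) ⟨‖T‖ * ‖q‖, ?_⟩ ⟨σ, hσ⟩
  rintro _ ⟨⟨σ, hσ⟩, rfl⟩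
  rw [div_le_iff₀ (norm_pos_iff.mpr hσ)]
  calc ⟪T σ, q⟫ ≤ ‖T σ‖ * ‖q‖ := real_inner_le_norm _ _
    _ ≤ ‖T‖ * ‖σ‖ * ‖q‖ := by gcongr; exact T.le_opNorm σ
    _ = ‖T‖ * ‖q‖ * ‖σ‖ := by ring

theorem div_mul_norm_le_iSup_inner_div_norm (T : X →L[ℝ] Q) {q : Q} {c K : ℝ} (hc : 0 < c)
    (hK : 0 < K) {σ : X} (hσ : ‖σ‖ ≤ K * ‖q‖) (hTσ : c * ‖q‖ ^ 2 ≤ ⟪T σ, q⟫) :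
    c / K * ‖q‖ ≤ ⨆ σ : {σ : X // σ ≠ 0}, ⟪T σ.1, q⟫ / ‖σ.1‖ := by
  rcases eq_or_ne q 0 with rfl | hq
  · simp
  have hσ0 : σ ≠ 0 := by
    rintro rfl
    have : 0 < c * ‖q‖ ^ 2 := by positivity
    rw [map_zero, inner_zero_left] at hTσ
    linarith
  refine le_trans ?_ (le_iSup_inner_div_norm T q hσ0)
  rw [le_div_iff₀ (norm_pos_iff.mpr hσ0)]
  calc c / K * ‖q‖ * ‖σ‖ ≤ c / K * ‖q‖ * (K * ‖q‖) := by gcongr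
    _ = c * ‖q‖ ^ 2 := by field_simp
    _ ≤ ⟪T σ, q⟫ := hTσ

end InfSup

section Orthogonal

variable {E : Type*} [NormedAddCommGroup E] [InnerProductSpace ℝ E]

theorem norm_le_norm_add_of_inner_eq_zero {u v : E} (h : ⟪u, v⟫ = 0) : ‖u‖ ≤ ‖u + v‖ := by
  rw [mul_self_le_mul_self_iff (norm_nonneg _) (norm_nonneg _),
    norm_add_sq_eq_norm_sq_add_norm_sq_real h]
  exact le_add_of_nonneg_right (mul_self_nonneg _)

theorem sq_norm_sub_mul_norm_le_inner (y : E) {u v : E} (h : ⟪u, v⟫ = 0) :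
    ‖u‖ ^ 2 - ‖y - u‖ * ‖u + v‖ ≤ ⟪y, u + v⟫ := by
  have hsplit : ⟪y, u + v⟫ = ⟪y - u, u + v⟫ + ‖u‖ ^ 2 := by
    rw [inner_sub_left, inner_add_right u, h, real_inner_self_eq_norm_sq]
    ring
  have := neg_le_of_abs_le (abs_real_inner_le_norm (y - u) (u + v))
  linarith

end Orthogonal

/-- `ε a b ≤ ε (a² + b²) / 2` leaves the coefficients `1 - 3ε/2 ≥ 7/10` and
`C - ε/2 ≥ (9/10) C`. -/
theorem min_mul_sq_add_sq_le {C ε a b : ℝ} (hε0 : 0 ≤ ε) (hε : ε ≤ min C 1 / 5) :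
    min ((9 / 10) * C) (7 / 10) * (a ^ 2 + b ^ 2) ≤ a ^ 2 - ε * a * (a + b) + C * b ^ 2 := by
  have hεC : ε ≤ C / 5 := hε.trans (by gcongr; exact min_le_left _ _)
  have hε1 : ε ≤ 1 / 5 := hε.trans (by gcongr; exact min_le_right _ _)
  linarith [mul_le_mul_of_nonneg_right (min_le_left ((9 / 10) * C) (7 / 10)) (sq_nonneg b),
    mul_le_mul_of_nonneg_right (min_le_right ((9 / 10) * C) (7 / 10)) (sq_nonneg a),
    mul_le_mul_of_nonneg_right hεC (sq_nonneg b), mul_le_mul_of_nonneg_right hε1 (sq_nonneg a),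
    mul_nonneg hε0 (sq_nonneg (a - b))]

theorem inf_sup_without_constraints_general
    {X Q : Type*} [NormedAddCommGroup X] [InnerProductSpace ℝ X]
    [NormedAddCommGroup Q] [InnerProductSpace ℝ Q] [CompleteSpace Q]
    (T : X →L[ℝ] Q) (Qbar : Submodule ℝ Q) (hQbarClosed : IsClosed (Qbar : Set Q))
    (C_IS C₀ ε : ℝ) (hCIS : 0 < C_IS) (hC₀ : 1 ≤ C₀)
    (hε0 : 0 ≤ ε) (hε : ε ≤ min C_IS 1 / 5)
    -- (i) inf-sup with orthogonality on the mean-free part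
    (h1 : ∀ qt ∈ Qbarᗮ, ∃ τ : X, ‖τ‖ ≤ ‖qt‖ ∧ C_IS * ‖qt‖ ^ 2 ≤ ⟪T τ, qt⟫ ∧
      ∀ r ∈ Qbar, ⟪T τ, r⟫ = 0)
    -- (ii) approximate preimages of the constrained part
    (h2 : ∀ qb ∈ Qbar, ∃ m : X, ‖m‖ ≤ C₀ * ‖qb‖ ∧ ‖T m - qb‖ ≤ ε * ‖qb‖) :
    ∀ q : Q, (min ((9 / 10) * C_IS) (7 / 10) / (2 * C₀)) * ‖q‖ ≤
      ⨆ σ : {σ : X // σ ≠ 0}, ⟪T σ.1, q⟫ / ‖σ.1‖ := by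
  intro q
  have : CompleteSpace Qbar := hQbarClosed.completeSpace_coe
  obtain ⟨qb, hqb, qt, hqt, rfl⟩ := Qbar.exists_add_mem_mem_orthogonal q
  obtain ⟨τ, hτ_norm, hτ_inner, hτ_orth⟩ := h1 qt hqt
  obtain ⟨m, hm_norm, hm_approx⟩ := h2 qb hqb
  have horth : ⟪qb, qt⟫ = 0 := Submodule.inner_right_of_mem_orthogonal hqb hqt
  have hqb_le : ‖qb‖ ≤ ‖qb + qt‖ := norm_le_norm_add_of_inner_eq_zero horth
  have hqt_le : ‖qt‖ ≤ ‖qb + qt‖ := add_comm qt qb ▸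
    norm_le_norm_add_of_inner_eq_zero ((real_inner_comm qb qt).trans horth)
  refine div_mul_norm_le_iSup_inner_div_norm T (lt_min (by positivity) (by norm_num))
    (by positivity) (σ := m + τ) ?_ ?_
  · calc ‖m + τ‖ ≤ C₀ * ‖qb‖ + ‖qt‖ := norm_add_le_of_le hm_norm hτ_norm
      _ ≤ C₀ * ‖qb + qt‖ + C₀ * ‖qb + qt‖ :=
          add_le_add (by gcongr) (hqt_le.trans (le_mul_of_one_le_left (norm_nonneg _) hC₀))
      _ = 2 * C₀ * ‖qb + qt‖ := by ring
  · have hm_err : ‖T m - qb‖ * ‖qb + qt‖ ≤ ε * ‖qb‖ * (‖qb‖ + ‖qt‖) :=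
      mul_le_mul hm_approx (norm_add_le qb qt) (norm_nonneg _) (by positivity)
    have hτq : ⟪T τ, qb + qt⟫ = ⟪T τ, qt⟫ := by rw [inner_add_right, hτ_orth qb hqb, zero_add]
    calc _ = _ * (‖qb‖ ^ 2 + ‖qt‖ ^ 2) := by
          simp only [sq, norm_add_sq_eq_norm_sq_add_norm_sq_real horth]
      _ ≤ ‖qb‖ ^ 2 - ε * ‖qb‖ * (‖qb‖ + ‖qt‖) + C_IS * ‖qt‖ ^ 2 := min_mul_sq_add_sq_le hε0 hε
      _ ≤ ‖qb‖ ^ 2 - ‖T m - qb‖ * ‖qb + qt‖ + ⟪T τ, qb + qt⟫ := by linarith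
      _ ≤ ⟪T m, qb + qt⟫ + ⟪T τ, qb + qt⟫ := by
          gcongr; exact sq_norm_sub_mul_norm_le_inner (T m) horth
      _ = ⟪T (m + τ), qb + qt⟫ := by rw [map_add, inner_add_left]

/-- Extension of an inf-sup condition from constrained spaces to the full space: if (i) on
the orthogonal complement `Q̄⊥` one has an inf-sup condition realized by elements `τ` whose
image is orthogonal to `Q̄`, and (ii) every element of `Q̄` admits an approximate preimage,
then the full inf-sup condition holds with constant `min{(9/10)C_IS, 7/10}/(2C₀)`. -/
theorem inf_sup_without_constraints
    {X Q : Type*} [NormedAddCommGroup X] [InnerProductSpace ℝ X] [CompleteSpace X]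
    [NormedAddCommGroup Q] [InnerProductSpace ℝ Q] [CompleteSpace Q]
    (T : X →L[ℝ] Q) (Qbar : Submodule ℝ Q) (hQbarClosed : IsClosed (Qbar : Set Q))
    (C_IS C₀ ε : ℝ) (hCIS : 0 < C_IS) (hC₀ : 1 ≤ C₀)
    (hε0 : 0 ≤ ε) (hε : ε ≤ min C_IS 1 / 5)
    -- (i) inf-sup with orthogonality on the mean-free part
    (h1 : ∀ qt ∈ Qbarᗮ, ∃ τ : X, ‖τ‖ ≤ ‖qt‖ ∧ C_IS * ‖qt‖ ^ 2 ≤ ⟪T τ, qt⟫ ∧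
      ∀ r ∈ Qbar, ⟪T τ, r⟫ = 0)
    -- (ii) approximate preimages of the constrained part
    (h2 : ∀ qb ∈ Qbar, ∃ m : X, ‖m‖ ≤ C₀ * ‖qb‖ ∧ ‖T m - qb‖ ≤ ε * ‖qb‖) :
    ∀ q : Q, (min ((9 / 10) * C_IS) (7 / 10) / (2 * C₀)) * ‖q‖ ≤
      ⨆ σ : {σ : X // σ ≠ 0}, ⟪T σ.1, q⟫ / ‖σ.1‖ :=
  inf_sup_without_constraints_general T Qbar hQbarClosed C_IS C₀ ε hCIS hC₀ hε0 hε h1 h2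
end
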